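/- arXiv:1212.3839 — 6 statements merged into one kernel-verified Lean document; each statement's English description precedes it below -/
import Mathlib

section
/- Let m ≥ 2, s ≥ 2, let P_1,…,P_s be unitary m×m complex matrices, and let k_{j,j'} ∈ ℂ be scalars with k_{1,j} ≠ 0 for all j; set B_{j,j'} = k_{j,j'} • (P_j * P_{j'}ᴴ). Define Q_1 = 1 and, for j ≥ 2, Q_j = (1/‖q_j‖) • (B_{1,j})⁻¹ where q_j is the first row of (B_{1,j})⁻¹ and ‖·‖ is the Euclidean norm. Then for all j, j' (1 ≤ j, j' ≤ s), the matrix Q_jᴴ * B_{j,j'} * Q_{j'} is a scalar matrix: there exists c ∈ ℂ with Q_jᴴ * B_{j,j'} * Q_{j'} = c • (1 : Matrix (Fin m) (Fin m) ℂ). -/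
open Matrix

/-- Theorem 3 (second part): the local unitary Q transforms all blocks
`B_{j,j'} = k_{j,j'} • (P_j P_{j'}ᴴ)` into scalar-matrix form.
Indices `j : Fin s` with `0` playing the role of the paper's index `1`; the
Euclidean norm of a row `v : Fin m → ℂ` is `Real.sqrt (∑ i, ‖v i‖ ^ 2)`.
(The `NeZero` instances are automatic consequences of `2 ≤ m` and `2 ≤ s`.) -/
theorem Q_transforms_blocks_to_scalar (m s : ℕ) [NeZero m] [NeZero s] (hm : 2 ≤ m) (hs : 2 ≤ s)
    (P : Fin s → Matrix (Fin m) (Fin m) ℂ)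
    (hP : ∀ j, P j ∈ Matrix.unitaryGroup (Fin m) ℂ)
    (k : Fin s → Fin s → ℂ) (hk : ∀ j, k 0 j ≠ 0)
    (B : Fin s → Fin s → Matrix (Fin m) (Fin m) ℂ)
    (hB : ∀ j j', B j j' = k j j' • (P j * (P j')ᴴ))
    (q : Fin s → Fin m → ℂ) (hq : ∀ j, q j = (B 0 j)⁻¹ 0)
    (Q : Fin s → Matrix (Fin m) (Fin m) ℂ)
    (hQ1 : Q 0 = 1)
    (hQ : ∀ j, j ≠ 0 → Q j = (1 / Real.sqrt (∑ i, ‖q j i‖ ^ 2)) • (B 0 j)⁻¹) :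
    ∀ j j' : Fin s, ∃ c : ℂ,
      (Q j)ᴴ * B j j' * Q j' = c • (1 : Matrix (Fin m) (Fin m) ℂ) := by
  have hPP : ∀ j, P j * (P j)ᴴ = 1 := fun j => Matrix.mem_unitaryGroup_iff.mp (hP j)
  have hPP' : ∀ j, (P j)ᴴ * P j = 1 := fun j => Matrix.mem_unitaryGroup_iff'.mp (hP j)
  have hreal : ∀ (r : ℝ) (X : Matrix (Fin m) (Fin m) ℂ), r • X = (r : ℂ) • X := by
    intro r X
    ext i j
    simp [Complex.real_smul]
  have key : ∀ j, ∃ c : ℂ, Q j = c • (P j * (P 0)ᴴ) := by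
    intro j
    by_cases h : j = 0
    · subst h
      exact ⟨1, by rw [hQ1, hPP, one_smul]⟩
    · refine ⟨((1 / Real.sqrt (∑ i, ‖q j i‖ ^ 2) : ℝ) : ℂ) * (k 0 j)⁻¹, ?_⟩
      have hinv : (B 0 j)⁻¹ = (k 0 j)⁻¹ • (P j * (P 0)ᴴ) := by
        apply Matrix.inv_eq_right_inv
        rw [hB, Matrix.smul_mul, Matrix.mul_smul, smul_smul, mul_inv_cancel₀ (hk j),
          one_smul, Matrix.mul_assoc, ← Matrix.mul_assoc (P j)ᴴ, hPP' j, Matrix.one_mul,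
          hPP 0]
      rw [hQ j h, hinv, hreal, smul_smul]
  intro j j'
  obtain ⟨c, hc⟩ := key j
  obtain ⟨c', hc'⟩ := key j'
  refine ⟨star c * k j j' * c', ?_⟩
  have hM : (P 0 * (P j)ᴴ) * (P j * (P j')ᴴ) * (P j' * (P 0)ᴴ) = 1 := by
    simp only [Matrix.mul_assoc]
    rw [← Matrix.mul_assoc (P j)ᴴ (P j), hPP' j, Matrix.one_mul,
      ← Matrix.mul_assoc (P j')ᴴ (P j'), hPP' j', Matrix.one_mul, hPP 0]
  rw [hc, hc', hB, Matrix.conjTranspose_smul, Matrix.conjTranspose_mul,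
    Matrix.conjTranspose_conjTranspose]
  simp only [Matrix.smul_mul, Matrix.mul_smul, smul_smul]
  rw [hM, mul_assoc]; ring_nf
end

section
/- Let S be a unital star subalgebra of Matrix (Fin n) (Fin n) ℂ, and let N be the maximum, over all self-adjoint A ∈ S, of the cardinality of the spectrum of A (the number of distinct eigenvalues). Then the set {A ∈ S : A = Aᴴ and A has exactly N distinct eigenvalues} is dense in the set {A ∈ S : A = Aᴴ} of self-adjoint elements of S, with respect to the topology induced from Matrix (Fin n) (Fin n) ℂ. -/
/-!
For a Hermitian matrix `M` with eigenvalues `λᵢ`, the Hankel matrix `(tr M^(j+k))_{j,k<N}` equals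
`VᴴV`, where `V = (λᵢ^k)` is the `N`-column Vandermonde matrix of the eigenvalues. So it is
nonsingular iff no nonzero polynomial of degree `< N` vanishes at all `λᵢ`, i.e. iff `M` has at
least `N` distinct eigenvalues. Given a self-adjoint `A ∈ S` and a generic `B ∈ S`, the determinant
of this Hankel matrix along the segment `A + t (B - A)` is a polynomial in `t`, nonzero at `t = 1`,
hence nonzero for all but finitely many real `t`; those points of the segment are generic and
accumulate at `A`.
-/

open Matrix Polynomial

namespace Polynomial

theorem exists_ne_zero_degree_lt_forall_eval_eq_zero_iff {R : Type*} [CommRing R] [IsDomain R]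
    (s : Finset R) (N : ℕ) :
    (∃ p : R[X], p ≠ 0 ∧ p.degree < N ∧ ∀ a ∈ s, p.eval a = 0) ↔ s.card < N := by
  refine ⟨fun ⟨p, hp0, hpN, hps⟩ => ?_, fun hs => ?_⟩
  · by_contra! hNs
    exact hp0 (eq_zero_of_degree_lt_of_eval_finset_eq_zero s
      (hpN.trans_le (by exact_mod_cast hNs)) hps)
  · have hmonic : (∏ a ∈ s, (X - C a)).Monic := monic_prod_X_sub_C _ s
    refine ⟨∏ a ∈ s, (X - C a), hmonic.ne_zero, ?_, fun a ha => ?_⟩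
    · rw [degree_eq_natDegree hmonic.ne_zero, natDegree_finsetProd_X_sub_C_eq_card]
      exact_mod_cast hs
    · rw [eval_prod]
      exact Finset.prod_eq_zero ha (by simp)

theorem dense_setOf_eval_ofReal_ne_zero {𝕜 : Type*} [RCLike 𝕜] {P : 𝕜[X]} (hP : P ≠ 0) :
    Dense {t : ℝ | P.eval (t : 𝕜) ≠ 0} := by
  have hroots : {t : ℝ | P.eval (t : 𝕜) = 0}.Countable :=
    ((finite_setOfPred_isRoot hP).preimage RCLike.ofReal_injective.injOn).countable
  exact hroots.dense_compl ℝ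

end Polynomial

namespace Matrix

section Vandermonde

variable {R ι : Type*} [CommRing R]

theorem rectVandermonde_one_mulVec_degreeLTEquiv {N : ℕ} (μ : ι → R) {p : R[X]}
    (hp : p ∈ degreeLT R N) :
    rectVandermonde μ 1 N *ᵥ degreeLTEquiv R N ⟨p, hp⟩ = fun i => p.eval (μ i) := by
  ext i
  simp [mulVec, dotProduct, rectVandermonde_apply, eval_eq_sum_degreeLTEquiv hp, mul_comm]

theorem exists_ne_zero_rectVandermonde_mulVec_eq_zero_iff [IsDomain R] [Fintype ι] (μ : ι → R)
    (N : ℕ) : (∃ x ≠ 0, rectVandermonde μ 1 N *ᵥ x = 0) ↔ (Set.range μ).ncard < N := by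
  classical
  have hcard : (Set.range μ).ncard = (Finset.univ.image μ).card := by
    rw [← Set.ncard_coe_finset]; simp
  rw [hcard, ← exists_ne_zero_degree_lt_forall_eval_eq_zero_iff]
  simp only [Finset.mem_image, Finset.mem_univ, true_and, forall_exists_index,
    forall_apply_eq_imp_iff]
  constructor
  · rintro ⟨x, hx0, hx⟩
    obtain ⟨⟨p, hp⟩, rfl⟩ := (degreeLTEquiv R N).surjective x
    rw [rectVandermonde_one_mulVec_degreeLTEquiv] at hx
    exact ⟨p, by simpa using hx0, mem_degreeLT.1 hp, congrFun hx⟩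
  · rintro ⟨p, hp0, hpN, hp⟩
    refine ⟨degreeLTEquiv R N ⟨p, mem_degreeLT.2 hpN⟩, by simpa using hp0, ?_⟩
    rw [rectVandermonde_one_mulVec_degreeLTEquiv]
    exact funext hp

end Vandermonde

theorem det_conjTranspose_mul_self_eq_zero_iff {R m n : Type*} [Field R] [PartialOrder R]
    [StarRing R] [StarOrderedRing R] [Fintype m] [Fintype n] [DecidableEq n] (A : Matrix m n R) :
    (Aᴴ * A).det = 0 ↔ ∃ x ≠ 0, A *ᵥ x = 0 := by
  simp only [← exists_mulVec_eq_zero_iff, conjTranspose_mul_self_mulVec_eq_zero]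

section TraceHankel

variable {R S n : Type*} [Fintype n] [DecidableEq n]

def traceHankel [Semiring R] (M : Matrix n n R) (N : ℕ) : Matrix (Fin N) (Fin N) R :=
  of fun j k => trace (M ^ (j + k : ℕ))

theorem _root_.RingHom.mapMatrix_traceHankel [Semiring R] [Semiring S] (f : R →+* S)
    (M : Matrix n n R) (N : ℕ) : f.mapMatrix (traceHankel M N) = traceHankel (f.mapMatrix M) N := by
  ext j k
  simp only [traceHankel, RingHom.mapMatrix_apply, map_apply, of_apply, AddMonoidHom.map_trace]
  rw [← RingHom.mapMatrix_apply, map_pow]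
  rfl

theorem exists_eval_eq_det_traceHankel_add_smul [CommRing R] (A B : Matrix n n R) (N : ℕ) :
    ∃ P : R[X], ∀ t : R, P.eval t = (traceHankel (A + t • B) N).det := by
  refine ⟨(traceHankel (A.map C + (X : R[X]) • B.map C) N).det, fun t => ?_⟩
  have hspecialize :
      (evalRingHom t).mapMatrix (A.map C + (X : R[X]) • B.map C) = A + t • B := by
    ext; simp [mul_comm t]
  rw [← coe_evalRingHom, RingHom.map_det, RingHom.mapMatrix_traceHankel, hspecialize]

end TraceHankel

namespace IsHermitian

open scoped ComplexOrder

variable {𝕜 n : Type*} [RCLike 𝕜] [Fintype n] [DecidableEq n] {A : Matrix n n 𝕜}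

theorem trace_pow (hA : A.IsHermitian) (r : ℕ) :
    (A ^ r).trace = ∑ i, (hA.eigenvalues i : 𝕜) ^ r := by
  conv_lhs => rw [hA.spectral_theorem, ← map_pow, Unitary.conjStarAlgAut_apply, trace_mul_cycle]
  simp [diagonal_pow, trace_diagonal]

theorem traceHankel_eq (hA : A.IsHermitian) (N : ℕ) :
    traceHankel A N = (rectVandermonde (fun i => (hA.eigenvalues i : 𝕜)) 1 N)ᴴ *
      rectVandermonde (fun i => (hA.eigenvalues i : 𝕜)) 1 N := by
  ext j k
  simp only [traceHankel, of_apply, hA.trace_pow]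
  simp [mul_apply, rectVandermonde_apply, pow_add]

theorem det_traceHankel_ne_zero_iff (hA : A.IsHermitian) (N : ℕ) :
    (traceHankel A N).det ≠ 0 ↔ N ≤ (spectrum 𝕜 A).ncard := by
  rw [hA.traceHankel_eq, Ne, det_conjTranspose_mul_self_eq_zero_iff,
    exists_ne_zero_rectVandermonde_mulVec_eq_zero_iff, not_lt, hA.spectrum_eq_image_range,
    ← Set.range_comp]
  rfl

end IsHermitian

end Matrix

/-- Generic elements (self-adjoint elements with the maximum possible number N
of distinct eigenvalues) are dense in the set of self-adjoint elements of a
matrix *-algebra S, in the topology induced from the matrix space. -/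
theorem generic_elements_dense (n : ℕ)
    (S : StarSubalgebra ℂ (Matrix (Fin n) (Fin n) ℂ))
    (N : ℕ)
    (hN : IsGreatest {c : ℕ | ∃ A ∈ S, A = Aᴴ ∧ (spectrum ℂ A).ncard = c} N) :
    {A : Matrix (Fin n) (Fin n) ℂ | A ∈ S ∧ A = Aᴴ} ⊆
      closure {A : Matrix (Fin n) (Fin n) ℂ |
        A ∈ S ∧ A = Aᴴ ∧ (spectrum ℂ A).ncard = N} := by
  rintro A ⟨hAS, hA⟩
  obtain ⟨B, hBS, hB, hBN⟩ := hN.1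
  replace hA : A.IsHermitian := hA.symm
  replace hB : B.IsHermitian := hB.symm
  let path : ℝ → Matrix (Fin n) (Fin n) ℂ := fun t => A + (t : ℂ) • (B - A)
  have path_mem : ∀ t, path t ∈ S := fun t => S.add_mem hAS (S.smul_mem (S.sub_mem hBS hAS) _)
  have path_hermitian : ∀ t, (path t).IsHermitian := fun t =>
    hA.add ((hB.sub hA).smul (Complex.conj_ofReal t))
  obtain ⟨P, hP⟩ := exists_eval_eq_det_traceHankel_add_smul A (B - A) N
  have hP0 : P ≠ 0 := by
    have hP1 : P.eval 1 = (traceHankel B N).det := by rw [hP, one_smul, add_sub_cancel]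
    rintro rfl
    exact (hB.det_traceHankel_ne_zero_iff N).2 hBN.ge (by rw [← hP1, eval_zero])
  have generic : Set.MapsTo path {t | P.eval (t : ℂ) ≠ 0}
      {A | A ∈ S ∧ A = Aᴴ ∧ (spectrum ℂ A).ncard = N} := fun t ht =>
    ⟨path_mem t, (path_hermitian t).symm,
      le_antisymm (hN.2 ⟨_, path_mem t, (path_hermitian t).symm, rfl⟩)
        (((path_hermitian t).det_traceHankel_ne_zero_iff N).1 (hP t ▸ ht))⟩
  have path_zero : path 0 = A := by simp [path]
  exact path_zero ▸ map_mem_closure (by fun_prop)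
    ((dense_setOf_eval_ofReal_ne_zero hP0).closure_eq ▸ Set.mem_univ 0) generic
end

section
/- Let n, m, r ≥ 1 and consider matrices indexed by (Fin n × Fin m) ⊕ Fin r. Suppose the Kraus operators A_1,…,A_p each have the block form A_k = fromBlocks (M_k ⊗ₖ (1 : Matrix (Fin m) (Fin m) ℂ)) 0 0 C_k for some M_k ∈ Matrix (Fin n) (Fin n) ℂ and C_k ∈ Matrix (Fin r) (Fin r) ℂ, and suppose the unitality condition Σ_{k=1}^p A_k * A_kᴴ = 1 holds. Then for every ρ̄ ∈ Matrix (Fin m) (Fin m) ℂ, the matrix ρ = fromBlocks ((1 : Matrix (Fin n) (Fin n) ℂ) ⊗ₖ ρ̄) 0 0 0 satisfies Σ_{k=1}^p A_k * ρ * A_kᴴ = ρ. -/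
open Matrix Kronecker


private lemma kron_conjT {a b : Type*} [Fintype a] [Fintype b] [DecidableEq a] [DecidableEq b]
    (X : Matrix a a ℂ) (Y : Matrix b b ℂ) : (X ⊗ₖ Y)ᴴ = Xᴴ ⊗ₖ Yᴴ := by
  ext ⟨i, c⟩ ⟨j, d⟩
  simp [Matrix.conjTranspose_apply]

/-- A state ρ̄ encoded as ρ = (I_n ⊗ ρ̄) ⊕ 0 in a decoherence-free subsystem is
exactly preserved by a unital channel whose Kraus operators have the block form
A_k = (M_k ⊗ I_m) ⊕ C_k. -/
theorem dfs_state_preserved (n m r p : ℕ) (hn : 1 ≤ n) (hm : 1 ≤ m) (hr : 1 ≤ r)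
    (M : Fin p → Matrix (Fin n) (Fin n) ℂ)
    (C : Fin p → Matrix (Fin r) (Fin r) ℂ)
    (A : Fin p → Matrix ((Fin n × Fin m) ⊕ Fin r) ((Fin n × Fin m) ⊕ Fin r) ℂ)
    (hA : ∀ k, A k = Matrix.fromBlocks
      (M k ⊗ₖ (1 : Matrix (Fin m) (Fin m) ℂ)) 0 0 (C k))
    (hunital : ∑ k, A k * (A k)ᴴ = 1)
    (ρbar : Matrix (Fin m) (Fin m) ℂ) :
    ∑ k, A k * Matrix.fromBlocks ((1 : Matrix (Fin n) (Fin n) ℂ) ⊗ₖ ρbar) 0 0 0 * (A k)ᴴ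
      = Matrix.fromBlocks ((1 : Matrix (Fin n) (Fin n) ℂ) ⊗ₖ ρbar) 0 0 0 := by
  have hAAH : ∀ k, A k * (A k)ᴴ =
      Matrix.fromBlocks ((M k * (M k)ᴴ) ⊗ₖ (1 : Matrix (Fin m) (Fin m) ℂ)) 0 0
        (C k * (C k)ᴴ) := by
    intro k
    rw [hA k]
    simp [Matrix.fromBlocks_conjTranspose, Matrix.fromBlocks_multiply,
      ← Matrix.mul_kronecker_mul, kron_conjT]
  -- Sum of M k * (M k)ᴴ is 1
  have hsum : (∑ k, M k * (M k)ᴴ) = 1 := by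
    have h1 : ∑ k, A k * (A k)ᴴ =
        Matrix.fromBlocks ((∑ k, M k * (M k)ᴴ) ⊗ₖ (1 : Matrix (Fin m) (Fin m) ℂ)) 0 0
          (∑ k, C k * (C k)ᴴ) := by
      simp only [hAAH]
      ext i j
      cases i <;> cases j <;> simp [Matrix.sum_apply, Finset.sum_mul]
    rw [hunital] at h1
    have j0 : Fin m := ⟨0, hm⟩
    ext i j
    have := congrFun (congrFun h1.symm (Sum.inl (i, j0))) (Sum.inl (j, j0))
    simp [Matrix.one_apply, Matrix.kroneckerMap_apply, Prod.ext_iff] at this ⊢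
    rcases eq_or_ne i j with h | h <;> simp [h] at this ⊢
    · exact this
    · exact this
  calc ∑ k, A k * Matrix.fromBlocks ((1 : Matrix (Fin n) (Fin n) ℂ) ⊗ₖ ρbar) 0 0 0 * (A k)ᴴ
      = Matrix.fromBlocks ((∑ k, M k * (M k)ᴴ) ⊗ₖ ρbar) 0 0 0 := by
        ext i j
        rw [Matrix.sum_apply]
        have : ∀ k, (A k * Matrix.fromBlocks ((1 : Matrix (Fin n) (Fin n) ℂ) ⊗ₖ ρbar) 0 0 0 * (A k)ᴴ)
            = Matrix.fromBlocks ((M k * (M k)ᴴ) ⊗ₖ ρbar) 0 0 0 := by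
          intro k
          rw [hA k]
          simp [Matrix.fromBlocks_conjTranspose, Matrix.fromBlocks_multiply,
            ← Matrix.mul_kronecker_mul, kron_conjT]
        simp only [this]
        cases i <;> cases j <;> simp [Matrix.sum_apply, Finset.sum_mul]
    _ = Matrix.fromBlocks ((1 : Matrix (Fin n) (Fin n) ℂ) ⊗ₖ ρbar) 0 0 0 := by rw [hsum]
end

section
/- Let ℓ ≥ 1, let m_1,…,m_ℓ and n_1,…,n_ℓ be positive integers, and let A = blockDiagonal' (fun i => B i ⊗ₖ (1 : Matrix (Fin m_i) (Fin m_i) ℂ)) with each B i ∈ Matrix (Fin n_i) (Fin n_i) ℂ self-adjoint. If the spectrum of A has cardinality exactly Σ_{i=1}^ℓ n_i, then each B i has n_i distinct eigenvalues (its spectrum has cardinality n_i), and the spectra of B i and B i' are disjoint whenever i ≠ i'. -/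
open Matrix Kronecker

lemma mem_spec_iff_det {n : Type*} [Fintype n] [DecidableEq n]
    (A : Matrix n n ℂ) (lam : ℂ) :
    lam ∈ spectrum ℂ A ↔ (lam • (1 : Matrix n n ℂ) - A).det = 0 := by
  rw [spectrum.mem_iff, Algebra.algebraMap_eq_smul_one,
    Matrix.isUnit_iff_isUnit_det, isUnit_iff_ne_zero, not_not]

lemma spec_subset_roots {n : ℕ} (A : Matrix (Fin n) (Fin n) ℂ) :
    spectrum ℂ A ⊆ (A.charpoly.roots.toFinset : Set ℂ) := by
  intro lam hlam
  rw [mem_spec_iff_det] at hlam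
  have heval : A.charpoly.eval lam = 0 := by
    rw [Matrix.charpoly, ← Polynomial.coe_evalRingHom, RingHom.map_det]
    convert hlam using 2
    ext i j
    by_cases h : i = j
    · subst h
      simp [Matrix.charmatrix_apply_eq, Matrix.one_apply]
    · simp [Matrix.charmatrix_apply_ne _ _ _ h, Matrix.one_apply_ne h]
  simp only [Finset.coe_sort_coe, Finset.mem_coe, Multiset.mem_toFinset]
  rw [Polynomial.mem_roots']
  exact ⟨(Matrix.charpoly_monic A).ne_zero, heval⟩

lemma spec_finite {n : ℕ} (A : Matrix (Fin n) (Fin n) ℂ) :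
    (spectrum ℂ A).Finite :=
  Set.Finite.subset (Finset.finite_toSet _) (spec_subset_roots A)

lemma spec_ncard_le {n : ℕ} (A : Matrix (Fin n) (Fin n) ℂ) :
    (spectrum ℂ A).ncard ≤ n := by
  calc (spectrum ℂ A).ncard ≤ (A.charpoly.roots.toFinset : Set ℂ).ncard :=
        Set.ncard_le_ncard (spec_subset_roots A) (Finset.finite_toSet _)
    _ ≤ n := by
        rw [Set.ncard_coe_finset]
        calc A.charpoly.roots.toFinset.card ≤ Multiset.card A.charpoly.roots :=
              Multiset.toFinset_card_le _
          _ ≤ A.charpoly.natDegree := Polynomial.card_roots' _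
          _ = n := by simp

lemma spec_kron_one {n m : ℕ} (hm : 0 < m) (A : Matrix (Fin n) (Fin n) ℂ) :
    spectrum ℂ (A ⊗ₖ (1 : Matrix (Fin m) (Fin m) ℂ)) = spectrum ℂ A := by
  ext lam
  simp only [mem_spec_iff_det]
  have h1 : lam • (1 : Matrix (Fin n × Fin m) _ ℂ) - A ⊗ₖ 1
      = (lam • (1 : Matrix (Fin n) (Fin n) ℂ) - A) ⊗ₖ (1 : Matrix (Fin m) (Fin m) ℂ) := by
    rw [← Matrix.one_kronecker_one (α := ℂ), ← Matrix.smul_kronecker]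
    ext ⟨i, k⟩ ⟨j, l⟩
    simp [Matrix.kroneckerMap_apply, sub_mul]
  rw [h1, Matrix.det_kronecker, Matrix.det_one, one_pow, mul_one]
  constructor
  · intro h
    exact pow_eq_zero_iff (by simpa using hm.ne') |>.mp (by simpa using h)
  · intro h
    simp [h, hm.ne']

lemma isUnit_blockDiagonal' {ℓ : ℕ} {m' : Fin ℓ → Type*}
    [∀ i, Fintype (m' i)] [∀ i, DecidableEq (m' i)]
    (N : (i : Fin ℓ) → Matrix (m' i) (m' i) ℂ) :
    IsUnit (Matrix.blockDiagonal' N) ↔ ∀ i, IsUnit (N i) := by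
  constructor
  · intro hU
    by_contra hc
    push_neg at hc
    obtain ⟨i, hi⟩ := hc
    have hdet : (N i).det = 0 := by
      by_contra hd
      exact hi ((Matrix.isUnit_iff_isUnit_det _).mpr (isUnit_iff_ne_zero.mpr hd))
    obtain ⟨v, hv0, hv⟩ := (Matrix.exists_mulVec_eq_zero_iff).mpr hdet
    set w : ((j : Fin ℓ) × m' j) → ℂ :=
      fun x => if h : x.1 = i then v (cast (congrArg m' h) x.2) else 0 with hw
    have hw0 : w ≠ 0 := by
      obtain ⟨k, hk⟩ := Function.ne_iff.mp hv0
      intro h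
      apply hk
      have := congrFun h ⟨i, k⟩
      simpa [hw] using this
    have hmul : Matrix.blockDiagonal' N *ᵥ w = 0 := by
      funext x
      obtain ⟨j, k⟩ := x
      show ∑ y : (j : Fin ℓ) × m' j, Matrix.blockDiagonal' N ⟨j, k⟩ y * w y = 0
      rw [← Finset.univ_sigma_univ, Finset.sum_sigma]
      rw [Finset.sum_eq_single j]
      · by_cases hji : j = i
        · subst hji
          have : ∀ l : m' j, Matrix.blockDiagonal' N ⟨j, k⟩ ⟨j, l⟩ * w ⟨j, l⟩
              = N j k l * v l := by
            intro l
            simp [Matrix.blockDiagonal'_apply', hw]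
          rw [Finset.sum_congr rfl fun l _ => this l]
          exact congrFun hv k
        · apply Finset.sum_eq_zero
          intro l _
          simp [hw, hji]
      · intro j' _ hj'
        apply Finset.sum_eq_zero
        intro l _
        rw [Matrix.blockDiagonal'_apply']
        rw [dif_neg (fun h => hj' h.symm)]
        ring
      · simp
    -- invertibility contradiction
    have : w = 0 := by
      have h1 : (↑hU.unit⁻¹ : Matrix _ _ ℂ) *ᵥ (Matrix.blockDiagonal' N *ᵥ w) = w := by
        rw [Matrix.mulVec_mulVec, hU.val_inv_mul, Matrix.one_mulVec]
      rw [hmul, Matrix.mulVec_zero] at h1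
      exact h1.symm
    exact hw0 this
  · intro h
    refine isUnit_iff_exists.mpr
      ⟨Matrix.blockDiagonal' fun i => (↑(h i).unit⁻¹ : Matrix (m' i) (m' i) ℂ), ?_, ?_⟩
    · rw [← Matrix.blockDiagonal'_mul, ← Matrix.blockDiagonal'_one]
      exact congrArg _ (funext fun i => (h i).mul_val_inv)
    · rw [← Matrix.blockDiagonal'_mul, ← Matrix.blockDiagonal'_one]
      exact congrArg _ (funext fun i => (h i).val_inv_mul)

lemma spec_blockDiagonal' {ℓ : ℕ} {m' : Fin ℓ → Type*}
    [∀ i, Fintype (m' i)] [∀ i, DecidableEq (m' i)]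
    (M : (i : Fin ℓ) → Matrix (m' i) (m' i) ℂ) :
    spectrum ℂ (Matrix.blockDiagonal' M) = ⋃ i, spectrum ℂ (M i) := by
  ext lam
  simp only [Set.mem_iUnion, spectrum.mem_iff, Algebra.algebraMap_eq_smul_one]
  have h1 : lam • (1 : Matrix ((i : Fin ℓ) × m' i) _ ℂ) - Matrix.blockDiagonal' M
      = Matrix.blockDiagonal' (fun i => lam • 1 - M i) := by
    rw [← Matrix.blockDiagonal'_one (m' := m') (α := ℂ), ← Matrix.blockDiagonal'_smul,
      ← Matrix.blockDiagonal'_sub]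
    rfl
  rw [h1, isUnit_blockDiagonal']
  push_neg
  rfl

lemma biUnion_card_disjoint {ℓ : ℕ} (S : Fin ℓ → Finset ℂ)
    (h : (Finset.univ.biUnion S).card = ∑ i, (S i).card) :
    ∀ i i', i ≠ i' → Disjoint (S i) (S i') := by
  intro i i' hne
  rw [Finset.disjoint_left]
  intro x hxi hxi'
  have hsub : Finset.univ.biUnion S ⊆ ((Finset.univ.erase i').biUnion S) ∪ (S i' \ {x}) := by
    intro y hy
    simp only [Finset.mem_biUnion, Finset.mem_univ, true_and] at hy
    obtain ⟨j, hj⟩ := hy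
    by_cases hji' : j = i'
    · subst hji'
      by_cases hyx : y = x
      · subst hyx
        apply Finset.mem_union_left
        exact Finset.mem_biUnion.mpr ⟨i, Finset.mem_erase.mpr ⟨hne, Finset.mem_univ i⟩, hxi⟩
      · exact Finset.mem_union_right _ (Finset.mem_sdiff.mpr ⟨hj, by simp [hyx]⟩)
    · exact Finset.mem_union_left _ (Finset.mem_biUnion.mpr
        ⟨j, Finset.mem_erase.mpr ⟨hji', Finset.mem_univ j⟩, hj⟩)
  have hb : (Finset.univ.biUnion S).card
      ≤ (∑ j ∈ Finset.univ.erase i', (S j).card) + ((S i').card - 1) := by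
    calc (Finset.univ.biUnion S).card
        ≤ (((Finset.univ.erase i').biUnion S) ∪ (S i' \ {x})).card :=
          Finset.card_le_card hsub
      _ ≤ ((Finset.univ.erase i').biUnion S).card + (S i' \ {x}).card :=
          Finset.card_union_le _ _
      _ ≤ (∑ j ∈ Finset.univ.erase i', (S j).card) + ((S i').card - 1) := by
          gcongr
          · exact Finset.card_biUnion_le
          · rw [Finset.card_sdiff_of_subset (by simpa using hxi')]
            simp
  have hpos : 1 ≤ (S i').card := Finset.card_pos.mpr ⟨x, hxi'⟩
  have hsum : (∑ j ∈ Finset.univ.erase i', (S j).card) + (S i').card = ∑ j, (S j).card :=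
    Finset.sum_erase_add _ _ (Finset.mem_univ i')
  omega

/-- If a self-adjoint element of the block algebra ⊕ᵢ M_{nᵢ} ⊗ I_{mᵢ} is generic
(has the maximum number Σᵢ nᵢ of distinct eigenvalues), then each block Bᵢ has
nᵢ distinct eigenvalues and different blocks have disjoint spectra. -/
theorem generic_element_blocks (ℓ : ℕ) (hℓ : 1 ≤ ℓ)
    (nn mm : Fin ℓ → ℕ) (hnn : ∀ i, 0 < nn i) (hmm : ∀ i, 0 < mm i)
    (B : (i : Fin ℓ) → Matrix (Fin (nn i)) (Fin (nn i)) ℂ)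
    (hB : ∀ i, B i = (B i)ᴴ)
    (hcard : (spectrum ℂ (Matrix.blockDiagonal'
      (fun i => B i ⊗ₖ (1 : Matrix (Fin (mm i)) (Fin (mm i)) ℂ)))).ncard = ∑ i, nn i) :
    (∀ i, (spectrum ℂ (B i)).ncard = nn i) ∧
    (∀ i i', i ≠ i' → Disjoint (spectrum ℂ (B i)) (spectrum ℂ (B i'))) := by
  classical
  have hspec : spectrum ℂ (Matrix.blockDiagonal'
      (fun i => B i ⊗ₖ (1 : Matrix (Fin (mm i)) (Fin (mm i)) ℂ)))
      = ⋃ i, spectrum ℂ (B i) := by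
    rw [spec_blockDiagonal']
    exact Set.iUnion_congr fun i => spec_kron_one (hmm i) (B i)
  rw [hspec] at hcard
  set S : Fin ℓ → Finset ℂ := fun i => (spec_finite (B i)).toFinset with hS
  have hScoe : ∀ i, (S i : Set ℂ) = spectrum ℂ (B i) := fun i => Set.Finite.coe_toFinset _
  have hUnion : (⋃ i, spectrum ℂ (B i)) = ↑(Finset.univ.biUnion S) := by
    rw [Finset.coe_biUnion]
    simp [hScoe]
  rw [hUnion, Set.ncard_coe_finset] at hcard
  have hcardS : ∀ i, (S i).card = (spectrum ℂ (B i)).ncard := by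
    intro i
    rw [← Set.ncard_coe_finset, hScoe]
  have hle : ∀ i, (S i).card ≤ nn i := fun i => (hcardS i) ▸ spec_ncard_le (B i)
  have hsum_eq : ∑ i, (S i).card = ∑ i, nn i := by
    have h1 : ∑ i, nn i ≤ ∑ i, (S i).card := hcard ▸ Finset.card_biUnion_le
    have h2 : ∑ i, (S i).card ≤ ∑ i, nn i := Finset.sum_le_sum fun i _ => hle i
    omega
  have heach : ∀ i, (S i).card = nn i := by
    intro i
    by_contra h
    have hlt : (S i).card < nn i := lt_of_le_of_ne (hle i) h
    have : ∑ j, (S j).card < ∑ j, nn j :=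
      Finset.sum_lt_sum (fun j _ => hle j) ⟨i, Finset.mem_univ i, hlt⟩
    omega
  constructor
  · intro i
    rw [← hcardS i]
    exact heach i
  · intro i i' hne
    have hdisj := biUnion_card_disjoint S (by rw [hcard, hsum_eq]) i i' hne
    rw [← hScoe i, ← hScoe i']
    exact Finset.disjoint_coe.mpr hdisj
end

section
/- For every number of qubits n ≥ 1, the star subalgebra of Matrix (Fin n → Fin 2) (Fin n → Fin 2) ℂ generated by {S_x, S_y} equals the star subalgebra generated by {S_x, S_y, S_z}; likewise the star subalgebra generated by {S_y, S_z} and the one generated by {S_x, S_z} both equal the star subalgebra generated by {S_x, S_y, S_z}. -/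
open Matrix

/-- The 2×2 Pauli matrices. -/
def pauliX : Matrix (Fin 2) (Fin 2) ℂ := !![0, 1; 1, 0]
def pauliY : Matrix (Fin 2) (Fin 2) ℂ := !![0, -Complex.I; Complex.I, 0]
def pauliZ : Matrix (Fin 2) (Fin 2) ℂ := !![1, 0; 0, -1]

/-- The collective spin operator: the sum over sites i of the operator acting
as σ on qubit i and as the identity on all other qubits. -/
noncomputable def collectiveSpin (n : ℕ) (σ : Matrix (Fin 2) (Fin 2) ℂ) :
    Matrix (Fin n → Fin 2) (Fin n → Fin 2) ℂ :=
  fun x y => ∑ i : Fin n,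
    σ (x i) (y i) * ∏ j ∈ Finset.univ.erase i, (if x j = y j then (1 : ℂ) else 0)

namespace CAux
variable {n : ℕ}

def del (i : Fin n) (x y : Fin n → Fin 2) : ℂ :=
  ∏ j ∈ Finset.univ.erase i, (if x j = y j then (1 : ℂ) else 0)

lemma del_eq (i : Fin n) (x y : Fin n → Fin 2) :
    del i x y = if (∀ j, j ≠ i → x j = y j) then 1 else 0 := by
  unfold del
  rw [Finset.prod_boole]
  congr 1
  simp [Finset.mem_erase]

lemma del_one {i : Fin n} {x y : Fin n → Fin 2} (h : ∀ j, j ≠ i → x j = y j) :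
    del i x y = 1 := by rw [del_eq, if_pos h]

lemma del_update_right (i : Fin n) (x : Fin n → Fin 2) (a : Fin 2) :
    del i x (Function.update x i a) = 1 :=
  del_one fun j hj => (Function.update_of_ne hj a x).symm

lemma del_update_left (i : Fin n) (x y : Fin n → Fin 2) (a : Fin 2) :
    del i (Function.update x i a) y = del i x y := by
  unfold del
  refine Finset.prod_congr rfl fun j hj => ?_
  rw [Function.update_of_ne (Finset.mem_erase.mp hj).1]

noncomputable def term (σ τ : Matrix (Fin 2) (Fin 2) ℂ) (x y : Fin n → Fin 2) (i k : Fin n) : ℂ :=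
  ∑ z : Fin n → Fin 2, σ (x i) (z i) * del i x z * (τ (z k) (y k) * del k z y)

lemma mul_apply_eq (σ τ : Matrix (Fin 2) (Fin 2) ℂ) (x y : Fin n → Fin 2) :
    (collectiveSpin n σ * collectiveSpin n τ) x y = ∑ i, ∑ k, term σ τ x y i k := by
  simp only [Matrix.mul_apply, collectiveSpin, term]
  simp only [Finset.sum_mul, Finset.mul_sum]
  rw [Finset.sum_congr rfl fun z _ => Finset.sum_comm, Finset.sum_comm]
  exact Finset.sum_congr rfl fun i _ => Finset.sum_comm

lemma term_diag (σ τ : Matrix (Fin 2) (Fin 2) ℂ) (x y : Fin n → Fin 2) (i : Fin n) :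
    term σ τ x y i i = (σ * τ) (x i) (y i) * del i x y := by
  unfold term
  have hsub : Finset.image (Function.update x i) Finset.univ ⊆ Finset.univ :=
    Finset.subset_univ _
  rw [← Finset.sum_subset hsub ?_]
  · rw [Finset.sum_image (fun a _ b _ h => Function.update_injective x i h)]
    have : ∀ a : Fin 2,
        σ (x i) ((Function.update x i a) i) * del i x (Function.update x i a) *
          (τ ((Function.update x i a) i) (y i) * del i (Function.update x i a) y)
        = σ (x i) a * τ a (y i) * del i x y := by
      intro a
      rw [Function.update_self, del_update_right, del_update_left]
      ring
    rw [Finset.sum_congr rfl fun a _ => this a, Matrix.mul_apply, Finset.sum_mul]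
  · intro z _ hz
    have : del i x z = 0 := by
      rw [del_eq, if_neg]
      intro hc
      exact hz (Finset.mem_image.mpr ⟨z i, Finset.mem_univ _, by
        funext j
        by_cases hj : j = i
        · subst hj; exact Function.update_self ..
        · rw [Function.update_of_ne hj]; exact hc j hj⟩)
    rw [this]; ring

lemma term_offdiag (σ τ : Matrix (Fin 2) (Fin 2) ℂ) (x y : Fin n → Fin 2) {i k : Fin n}
    (h : i ≠ k) :
    term σ τ x y i k = σ (x i) (y i) * τ (x k) (y k) *
      ∏ j ∈ (Finset.univ.erase k).erase i, (if x j = y j then (1 : ℂ) else 0) := by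
  unfold term
  rw [Finset.sum_eq_single (Function.update x i (y i))]
  · rw [Function.update_self, del_update_right,
      Function.update_of_ne (Ne.symm h)]
    have hk : del k (Function.update x i (y i)) y =
        ∏ j ∈ (Finset.univ.erase k).erase i, (if x j = y j then (1 : ℂ) else 0) := by
      unfold del
      have hi : i ∈ Finset.univ.erase k := Finset.mem_erase.mpr ⟨h, Finset.mem_univ _⟩
      rw [← Finset.mul_prod_erase _ _ hi, Function.update_self, if_pos rfl, one_mul]
      refine Finset.prod_congr rfl fun j hj => ?_
      rw [Function.update_of_ne (Finset.mem_erase.mp hj).1]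
    rw [hk]; ring
  · intro z _ hz
    by_cases h1 : ∀ j, j ≠ i → x j = z j
    · by_cases h2 : ∀ j, j ≠ k → z j = y j
      · exfalso
        apply hz
        funext j
        by_cases hj : j = i
        · subst hj; rw [Function.update_self]; exact h2 _ h
        · rw [Function.update_of_ne hj]; exact (h1 j hj).symm
      · have : del k z y = 0 := by rw [del_eq, if_neg h2]
        rw [this]; ring
    · have : del i x z = 0 := by rw [del_eq, if_neg h1]
      rw [this]; ring
  · intro hmem; exact absurd (Finset.mem_univ _) hmem

lemma commutator_eq (σ τ : Matrix (Fin 2) (Fin 2) ℂ) :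
    collectiveSpin n σ * collectiveSpin n τ - collectiveSpin n τ * collectiveSpin n σ
      = collectiveSpin n (σ * τ - τ * σ) := by
  ext x y
  rw [Matrix.sub_apply, mul_apply_eq, mul_apply_eq, Finset.sum_comm (f := term τ σ x y),
    ← Finset.sum_sub_distrib]
  simp only [← Finset.sum_sub_distrib]
  show (∑ i, ∑ k, (term σ τ x y i k - term τ σ x y k i)) = _
  unfold collectiveSpin
  refine Finset.sum_congr rfl fun i _ => ?_
  rw [Finset.sum_eq_single i]
  · rw [term_diag, term_diag, Matrix.sub_apply]
    show _ = (σ * τ - τ * σ) (x i) (y i) * del i x y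
    rw [Matrix.sub_apply]; ring
  · intro k _ hk
    rw [term_offdiag _ _ _ _ (Ne.symm hk), term_offdiag _ _ _ _ hk,
      Finset.erase_right_comm]
    ring
  · intro hmem; exact absurd (Finset.mem_univ _) hmem

lemma smul_collect (c : ℂ) (σ : Matrix (Fin 2) (Fin 2) ℂ) :
    collectiveSpin n (c • σ) = c • collectiveSpin n σ := by
  ext x y
  simp [collectiveSpin, Finset.mul_sum, mul_assoc]


lemma third_mem {n : ℕ} {σ τ ρ : Matrix (Fin 2) (Fin 2) ℂ} {c : ℂ} (hc : c ≠ 0)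
    (h : σ * τ - τ * σ = c • ρ) :
    collectiveSpin n ρ ∈ StarAlgebra.adjoin ℂ {collectiveSpin n σ, collectiveSpin n τ} := by
  have h2 : collectiveSpin n σ * collectiveSpin n τ
        - collectiveSpin n τ * collectiveSpin n σ = c • collectiveSpin n ρ := by
    rw [commutator_eq, h, smul_collect]
  have key : collectiveSpin n ρ = c⁻¹ • (collectiveSpin n σ * collectiveSpin n τ
      - collectiveSpin n τ * collectiveSpin n σ) := by
    rw [h2, smul_smul, inv_mul_cancel₀ hc, one_smul]
  rw [key]
  have hσ : collectiveSpin n σ ∈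
      StarAlgebra.adjoin ℂ {collectiveSpin n σ, collectiveSpin n τ} :=
    StarAlgebra.subset_adjoin ℂ _ (Set.mem_insert _ _)
  have hτ : collectiveSpin n τ ∈
      StarAlgebra.adjoin ℂ {collectiveSpin n σ, collectiveSpin n τ} :=
    StarAlgebra.subset_adjoin ℂ _ (Set.mem_insert_of_mem _ rfl)
  exact SMulMemClass.smul_mem _ (sub_mem (mul_mem hσ hτ) (mul_mem hτ hσ))

lemma pauli_XY : pauliX * pauliY - pauliY * pauliX = (2 * Complex.I) • pauliZ := by
  ext i j
  fin_cases i <;> fin_cases j <;>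
    simp [pauliX, pauliY, pauliZ, Matrix.mul_apply, Fin.sum_univ_two] <;>
    (try ring_nf) <;> norm_num [Complex.I_sq]

lemma pauli_YZ : pauliY * pauliZ - pauliZ * pauliY = (2 * Complex.I) • pauliX := by
  ext i j
  fin_cases i <;> fin_cases j <;>
    simp [pauliX, pauliY, pauliZ, Matrix.mul_apply, Fin.sum_univ_two] <;>
    (try ring_nf) <;> norm_num [Complex.I_sq]

lemma pauli_XZ : pauliX * pauliZ - pauliZ * pauliX = (-(2 * Complex.I)) • pauliY := by
  ext i j
  fin_cases i <;> fin_cases j <;>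
    simp [pauliX, pauliY, pauliZ, Matrix.mul_apply, Fin.sum_univ_two] <;>
    (try ring_nf) <;> norm_num [Complex.I_sq]

lemma two_I_ne : (2 * Complex.I) ≠ 0 := by
  simp [Complex.I_ne_zero]

end CAux

/-- Any two of the three collective spin operators generate the full collective
noise algebra. -/
theorem collective_noise_algebra_two_generators (n : ℕ) (hn : 1 ≤ n) :
    StarAlgebra.adjoin ℂ {collectiveSpin n pauliX, collectiveSpin n pauliY} =
        StarAlgebra.adjoin ℂ
          {collectiveSpin n pauliX, collectiveSpin n pauliY, collectiveSpin n pauliZ} ∧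
      StarAlgebra.adjoin ℂ {collectiveSpin n pauliY, collectiveSpin n pauliZ} =
        StarAlgebra.adjoin ℂ
          {collectiveSpin n pauliX, collectiveSpin n pauliY, collectiveSpin n pauliZ} ∧
      StarAlgebra.adjoin ℂ {collectiveSpin n pauliX, collectiveSpin n pauliZ} =
        StarAlgebra.adjoin ℂ
          {collectiveSpin n pauliX, collectiveSpin n pauliY, collectiveSpin n pauliZ} := by
  have hX : collectiveSpin n pauliX ∈
      StarAlgebra.adjoin ℂ {collectiveSpin n pauliY, collectiveSpin n pauliZ} :=
    CAux.third_mem CAux.two_I_ne CAux.pauli_YZ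
  have hY : collectiveSpin n pauliY ∈
      StarAlgebra.adjoin ℂ {collectiveSpin n pauliX, collectiveSpin n pauliZ} :=
    CAux.third_mem (neg_ne_zero.mpr CAux.two_I_ne) CAux.pauli_XZ
  have hZ : collectiveSpin n pauliZ ∈
      StarAlgebra.adjoin ℂ {collectiveSpin n pauliX, collectiveSpin n pauliY} :=
    CAux.third_mem CAux.two_I_ne CAux.pauli_XY
  refine ⟨?_, ?_, ?_⟩ <;>
  · refine le_antisymm ?_ (StarAlgebra.adjoin_le ?_)
    · refine StarAlgebra.adjoin_le fun z hz => StarAlgebra.subset_adjoin ℂ _ ?_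
      simp only [Set.mem_insert_iff, Set.mem_singleton_iff] at hz ⊢
      tauto
    · intro z hz
      simp only [Set.mem_insert_iff, Set.mem_singleton_iff] at hz
      rcases hz with rfl | rfl | rfl <;>
        first
          | exact hX | exact hY | exact hZ
          | exact StarAlgebra.subset_adjoin ℂ _ (Set.mem_insert _ _)
          | exact StarAlgebra.subset_adjoin ℂ _ (Set.mem_insert_of_mem _ rfl)
end

section
/- For n = 3 qubits, the star subalgebra A of Matrix (Fin 3 → Fin 2) (Fin 3 → Fin 2) ℂ generated by the collective spin operators {S_x, S_y, S_z} admits a Wedderburn decomposition of the form (M_2 ⊗ I_2) ⊕ M_4: there exist a bijection e : (Fin 3 → Fin 2) ≃ (Fin 2 × Fin 2) ⊕ Fin 4 and a unitary matrix U such that for every M, M ∈ A if and only if there exist B ∈ Matrix (Fin 2) (Fin 2) ℂ and C ∈ Matrix (Fin 4) (Fin 4) ℂ with Uᴴ * M * U, reindexed along e, equal to fromBlocks (B ⊗ₖ (1 : Matrix (Fin 2) (Fin 2) ℂ)) 0 0 C. -/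
open Matrix Kronecker

/-!
Three spins ½ decompose as ½ ⊗ ℂ² ⊕ 3/2. Take as new basis two spin-½ doublets (qubit 0 times
the singlet of qubits 1 and 2, and the doublet orthogonal to it) together with the four Dicke
states spanning the symmetric subspace. In this basis every collective operator
`S(σ) = ∑ᵢ σ⁽ⁱ⁾` becomes block diagonal, `(σ + tr σ) ⊗ 1` on the doublets and the spin-3/2
representation `ρ(σ)` on the Dicke states. Hence the algebra generated by `S_x, S_y, S_z` is
carried onto the image of the algebra of `M₂ × M₄` generated by the pairs `(σ_w, ρ(σ_w))`, and
this is everything: the Casimir `∑_w (σ_w, ρ(σ_w))²` equals `(3, 15)`, which separates the two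
factors, and each factor is generated by a diagonal matrix with distinct eigenvalues (`σ_z`,
resp. `ρ(σ_z)`) together with a matrix whose entries next to the diagonal are non-zero (`σ_x`,
resp. `ρ(σ_x)`).
-/

namespace Matrix

section Subalgebra

variable {K n : Type*} [Field K] [Fintype n] [DecidableEq n]

open Polynomial in
theorem aeval_diagonal (d : n → K) (p : K[X]) :
    aeval (diagonal d) p = diagonal fun k => p.eval (d k) := by
  rw [← diagonalAlgHom_apply (R := K), aeval_algHom_apply, aeval_pi_apply]
  rfl

variable {S : Subalgebra K (Matrix n n K)}

theorem single_self_mem_of_diagonal_mem {d : n → K} (hd : Function.Injective d)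
    (hdS : diagonal d ∈ S) (i : n) : single i i 1 ∈ S := by
  have hbasis : Polynomial.aeval (diagonal d) (Lagrange.basis Finset.univ d i) = single i i 1 := by
    rw [aeval_diagonal, ← diagonal_single]
    congr 1
    ext k
    rcases eq_or_ne k i with rfl | hk
    · simp [Lagrange.eval_basis_self hd.injOn]
    · simp [Lagrange.eval_basis_of_ne hk.symm, hk]
  rw [← hbasis]
  exact Algebra.adjoin_le (Set.singleton_subset_iff.2 hdS)
    (Polynomial.aeval_mem_adjoin_singleton K _)

theorem single_mem_of_apply_ne_zero {i j : n} (hi : single i i 1 ∈ S) (hj : single j j 1 ∈ S)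
    {A : Matrix n n K} (hA : A ∈ S) (hij : A i j ≠ 0) : single i j 1 ∈ S := by
  have h : single i j 1 = (A i j)⁻¹ • (single i i 1 * A * single j j 1) := by
    rw [single_mul_mul_single, one_mul, mul_one, smul_single, smul_eq_mul, inv_mul_cancel₀ hij]
  rw [h]
  exact S.smul_mem (mul_mem (mul_mem hi hA) hj) _

theorem subalgebra_eq_top_of_single_mem (h : ∀ i j, single i j 1 ∈ S) : S = ⊤ := by
  refine eq_top_iff.2 fun A _ => ?_
  rw [matrix_eq_sum_single A]
  refine sum_mem fun i _ => sum_mem fun j _ => ?_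
  rw [← mul_one (A i j), ← smul_eq_mul, ← smul_single]
  exact S.smul_mem (h i j) _

end Subalgebra

theorem subalgebra_eq_top_of_injective_diagonal_mem {K : Type*} [Field K] {m : ℕ}
    {S : Subalgebra K (Matrix (Fin m) (Fin m) K)} {d : Fin m → K} (hd : Function.Injective d)
    (hdS : diagonal d ∈ S) {A : Matrix (Fin m) (Fin m) K} (hA : A ∈ S)
    (hadj : ∀ i j : Fin m, (j : ℕ) = i + 1 → A i j ≠ 0 ∧ A j i ≠ 0) : S = ⊤ := by
  have hdiag := single_self_mem_of_diagonal_mem hd hdS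
  have hdist : ∀ k : ℕ, ∀ i j : Fin m, (j : ℕ) = i + k →
      single i j 1 ∈ S ∧ single j i 1 ∈ S := by
    intro k
    induction k with
    | zero =>
      intro i j hij
      obtain rfl : i = j := Fin.ext (by omega)
      exact ⟨hdiag i, hdiag i⟩
    | succ k ih =>
      intro i j hij
      let l : Fin m := ⟨i + k, by omega⟩
      obtain ⟨hil, hli⟩ := ih i l rfl
      obtain ⟨hlj, hjl⟩ := hadj l j (by simp only [l]; omega)
      constructor
      · simpa using mul_mem hil (single_mem_of_apply_ne_zero (hdiag l) (hdiag j) hA hlj)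
      · simpa using mul_mem (single_mem_of_apply_ne_zero (hdiag j) (hdiag l) hA hjl) hli
  refine subalgebra_eq_top_of_single_mem fun i j => ?_
  rcases le_total i j with hij | hij
  · exact (hdist (j - i) i j (by omega)).1
  · exact (hdist (i - j) j i (by omega)).2

section StarAlgHom

variable {R m n p : Type*} [Fintype m] [Fintype n] [Fintype p]
  [DecidableEq m] [DecidableEq n] [DecidableEq p]

section CommSemiring

variable [CommSemiring R] [StarRing R]

variable (R m n) in
def fromBlocksStarAlgHom : Matrix m m R × Matrix n n R →⋆ₐ[R] Matrix (m ⊕ n) (m ⊕ n) R where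
  toFun A := fromBlocks A.1 0 0 A.2
  map_one' := fromBlocks_one
  map_mul' A B := by simp [fromBlocks_multiply]
  map_zero' := fromBlocks_zero
  map_add' A B := by simp [fromBlocks_add]
  commutes' r := by
    simp [Algebra.algebraMap_eq_smul_one, ← fromBlocks_one, fromBlocks_smul]
  map_star' A := by simp [star_eq_conjTranspose, fromBlocks_conjTranspose]

variable (R m p) in
def kroneckerOneStarAlgHom : Matrix m m R →⋆ₐ[R] Matrix (m × p) (m × p) R where
  toFun A := A ⊗ₖ (1 : Matrix p p R)
  map_one' := one_kronecker_one
  map_mul' A B := by rw [← mul_kronecker_mul, one_mul]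
  map_zero' := zero_kronecker _
  map_add' A B := add_kronecker _ _ _
  commutes' r := by simp [Algebra.algebraMap_eq_smul_one, smul_kronecker]
  map_star' A := by simp [star_eq_conjTranspose, conjTranspose_kronecker]

variable (R) in
def reindexStarAlgEquiv (e : m ≃ n) : Matrix m m R ≃⋆ₐ[R] Matrix n n R :=
  .ofAlgEquiv (reindexAlgEquiv R R e) fun A => (conjTranspose_reindex e e A).symm

@[simp]
theorem reindexStarAlgEquiv_apply (e : m ≃ n) (A : Matrix m m R) :
    reindexStarAlgEquiv R e A = reindex e e A := rfl

end CommSemiring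

variable [CommRing R] [StarRing R]

def unitaryConjReindex (U : unitaryGroup m R) (e : m ≃ n) : Matrix m m R ≃⋆ₐ[R] Matrix n n R :=
  (Unitary.conjStarAlgAut R _ (star U)).trans (reindexStarAlgEquiv R e)

theorem unitaryConjReindex_apply (U : unitaryGroup m R) (e : m ≃ n) (M : Matrix m m R) :
    unitaryConjReindex U e M = reindex e e ((U : Matrix m m R)ᴴ * M * (U : Matrix m m R)) := by
  simp [unitaryConjReindex, star_eq_conjTranspose]

theorem reindex_mem_unitaryGroup {U : Matrix m m R} (hU : U ∈ unitaryGroup m R) (e : m ≃ n) :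
    reindex e e U ∈ unitaryGroup n R := by
  rw [mem_unitaryGroup_iff'] at hU ⊢
  have h := congr(reindexStarAlgEquiv R e $hU)
  rwa [map_mul, map_star, map_one] at h

end StarAlgHom

end Matrix

theorem StarAlgEquiv.apply_mem_adjoin_image_iff {R A B : Type*} [CommSemiring R] [StarRing R]
    [Semiring A] [StarRing A] [Algebra R A] [StarModule R A]
    [Semiring B] [StarRing B] [Algebra R B] [StarModule R B]
    (Φ : A ≃⋆ₐ[R] B) (s : Set A) (x : A) :
    Φ x ∈ StarAlgebra.adjoin R (Φ '' s) ↔ x ∈ StarAlgebra.adjoin R s := by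
  have h := StarAlgHom.map_adjoin (Φ : A →⋆ₐ[R] B) s
  simp only [StarAlgHom.coe_coe] at h
  rw [← h, StarSubalgebra.mem_map]
  exact ⟨fun ⟨y, hy, hxy⟩ => Φ.injective hxy ▸ hy, fun hx => ⟨x, hx, rfl⟩⟩

theorem Subalgebra.eq_top_of_map_fst_of_map_snd {R A B : Type*} [CommRing R] [Ring A] [Ring B]
    [Algebra R A] [Algebra R B] {T : Subalgebra R (A × B)} (h01 : ((0, 1) : A × B) ∈ T)
    (hfst : T.map (AlgHom.fst R A B) = ⊤) (hsnd : T.map (AlgHom.snd R A B) = ⊤) : T = ⊤ := by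
  have h10 : ((1, 0) : A × B) ∈ T := by
    convert sub_mem (one_mem T) h01 using 1
    ext <;> simp
  refine eq_top_iff.2 fun ⟨a, b⟩ _ => ?_
  obtain ⟨⟨a, b'⟩, hab', rfl⟩ := Subalgebra.mem_map.1 (hfst ▸ Algebra.mem_top : a ∈ _)
  obtain ⟨⟨a', b⟩, ha'b, rfl⟩ := Subalgebra.mem_map.1 (hsnd ▸ Algebra.mem_top : b ∈ _)
  simpa using add_mem (mul_mem h10 hab') (mul_mem h01 ha'b)

theorem pauliX_mul_self : pauliX * pauliX = 1 := by
  ext i j; fin_cases i <;> fin_cases j <;> simp [pauliX, mul_apply, Fin.sum_univ_two]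

theorem pauliY_mul_self : pauliY * pauliY = 1 := by
  ext i j; fin_cases i <;> fin_cases j <;> simp [pauliY, mul_apply, Fin.sum_univ_two]

theorem pauliZ_mul_self : pauliZ * pauliZ = 1 := by
  ext i j; fin_cases i <;> fin_cases j <;> simp [pauliZ, mul_apply, Fin.sum_univ_two]

theorem trace_pauliX : pauliX.trace = 0 := by simp [pauliX, trace_fin_two]

theorem trace_pauliY : pauliY.trace = 0 := by simp [pauliY, trace_fin_two]

theorem trace_pauliZ : pauliZ.trace = 0 := by simp [pauliZ, trace_fin_two]

theorem pauliZ_eq_diagonal : pauliZ = diagonal ![1, -1] := by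
  ext i j; fin_cases i <;> fin_cases j <;> simp [pauliZ]

theorem collectiveSpin_three (σ : Matrix (Fin 2) (Fin 2) ℂ) (x y : Fin 3 → Fin 2) :
    collectiveSpin 3 σ x y =
      σ (x 0) (y 0) * ((if x 1 = y 1 then 1 else 0) * (if x 2 = y 2 then 1 else 0)) +
      σ (x 1) (y 1) * ((if x 0 = y 0 then 1 else 0) * (if x 2 = y 2 then 1 else 0)) +
      σ (x 2) (y 2) * ((if x 0 = y 0 then 1 else 0) * (if x 1 = y 1 then 1 else 0)) := by
  have h0 : Finset.univ.erase (0 : Fin 3) = {1, 2} := by decide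
  have h1 : Finset.univ.erase (1 : Fin 3) = {0, 2} := by decide
  have h2 : Finset.univ.erase (2 : Fin 3) = {0, 1} := by decide
  simp only [collectiveSpin, Fin.sum_univ_three, h0, h1, h2,
    Finset.prod_pair (show (1 : Fin 3) ≠ 2 by decide),
    Finset.prod_pair (show (0 : Fin 3) ≠ 2 by decide),
    Finset.prod_pair (show (0 : Fin 3) ≠ 1 by decide)]

namespace ThreeQubits

noncomputable section

def sqrt2 : ℂ := (Real.sqrt 2 : ℝ)

def sqrt3 : ℂ := (Real.sqrt 3 : ℝ)

theorem sqrt2_sq : sqrt2 ^ 2 = 2 := by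
  rw [sqrt2, ← Complex.ofReal_pow, Real.sq_sqrt (by norm_num)]; norm_num

theorem sqrt3_sq : sqrt3 ^ 2 = 3 := by
  rw [sqrt3, ← Complex.ofReal_pow, Real.sq_sqrt (by norm_num)]; norm_num

@[simp] theorem conj_sqrt2 : starRingEnd ℂ sqrt2 = sqrt2 := Complex.conj_ofReal _

@[simp] theorem conj_sqrt3 : starRingEnd ℂ sqrt3 = sqrt3 := Complex.conj_ofReal _

theorem sqrt3_ne_zero : sqrt3 ≠ 0 := by
  rw [sqrt3, Complex.ofReal_ne_zero, Real.sqrt_ne_zero']; norm_num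

/-- The action of `σ ∈ 𝔤𝔩₂` on the symmetric subspace of three qubits, in the orthonormal basis
of Dicke states with `0, 1, 2, 3` qubits in state `1`. -/
def spinThreeHalfRep (σ : Matrix (Fin 2) (Fin 2) ℂ) : Matrix (Fin 4) (Fin 4) ℂ :=
  !![3 * σ 0 0, sqrt3 * σ 0 1, 0, 0;
     sqrt3 * σ 1 0, 2 * σ 0 0 + σ 1 1, 2 * σ 0 1, 0;
     0, 2 * σ 1 0, σ 0 0 + 2 * σ 1 1, sqrt3 * σ 0 1;
     0, 0, sqrt3 * σ 1 0, 3 * σ 1 1]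

theorem spinThreeHalfRep_pauliZ : spinThreeHalfRep pauliZ = diagonal ![3, 1, -1, -3] := by
  ext i j; fin_cases i <;> fin_cases j <;> norm_num [spinThreeHalfRep, pauliZ]

theorem spinThreeHalfRep_casimir :
    spinThreeHalfRep pauliX ^ 2 + spinThreeHalfRep pauliY ^ 2 + spinThreeHalfRep pauliZ ^ 2 =
      (15 : ℂ) • 1 := by
  ext i j
  fin_cases i <;> fin_cases j <;>
    simp [sq, spinThreeHalfRep, pauliX, pauliY, pauliZ, one_apply] <;>
    ring_nf <;> simp [sqrt3_sq] <;> norm_num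

def blockEmbedding : Matrix (Fin 2) (Fin 2) ℂ × Matrix (Fin 4) (Fin 4) ℂ →⋆ₐ[ℂ]
    Matrix ((Fin 2 × Fin 2) ⊕ Fin 4) ((Fin 2 × Fin 2) ⊕ Fin 4) ℂ :=
  (fromBlocksStarAlgHom ℂ _ _).comp
    (((kroneckerOneStarAlgHom ℂ _ _).comp (StarAlgHom.fst ℂ _ _)).prod (StarAlgHom.snd ℂ _ _))

theorem blockEmbedding_apply (B : Matrix (Fin 2) (Fin 2) ℂ) (C : Matrix (Fin 4) (Fin 4) ℂ) :
    blockEmbedding (B, C) = fromBlocks (B ⊗ₖ (1 : Matrix (Fin 2) (Fin 2) ℂ)) 0 0 C := rfl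

/-- Computational basis states `x` are numbered in binary, `x 0` being the lowest digit. -/
def qubitLabel : (Fin 3 → Fin 2) ≃ Fin 8 := finFunctionFinEquiv (m := 2) (n := 3)

theorem qubitLabel_symm_eq : ⇑qubitLabel.symm =
    ![![0, 0, 0], ![1, 0, 0], ![0, 1, 0], ![1, 1, 0], ![0, 0, 1], ![1, 0, 1], ![0, 1, 1],
      ![1, 1, 1]] := by
  decide

def blockLabel : Fin 8 ≃ (Fin 2 × Fin 2) ⊕ Fin 4 :=
  (finSumFinEquiv (m := 4) (n := 4)).symm.trans
    (Equiv.sumCongr (finProdFinEquiv (m := 2) (n := 2)).symm (Equiv.refl _))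

theorem blockLabel_eq : ⇑blockLabel =
    ![.inl (0, 0), .inl (0, 1), .inl (1, 0), .inl (1, 1), .inr 0, .inr 1, .inr 2, .inr 3] := by
  decide

/-- Columns: the doublet states `(m, k)` (`m` the spin-½ state, `k` the copy: `k = 0` is qubit 0
times the singlet of qubits 1, 2), then the Dicke states; rows numbered by `qubitLabel`. -/
def clebschGordan : Matrix (Fin 8) (Fin 8) ℂ :=
  !![0, 0, 0, 0, 1, 0, 0, 0;
     0, sqrt2 * sqrt3 / 3, 0, 0, 0, sqrt3 / 3, 0, 0;
     -sqrt2 / 2, -sqrt2 * sqrt3 / 6, 0, 0, 0, sqrt3 / 3, 0, 0;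
     0, 0, -sqrt2 / 2, sqrt2 * sqrt3 / 6, 0, 0, sqrt3 / 3, 0;
     sqrt2 / 2, -sqrt2 * sqrt3 / 6, 0, 0, 0, sqrt3 / 3, 0, 0;
     0, 0, sqrt2 / 2, sqrt2 * sqrt3 / 6, 0, 0, sqrt3 / 3, 0;
     0, 0, 0, -sqrt2 * sqrt3 / 3, 0, 0, sqrt3 / 3, 0;
     0, 0, 0, 0, 0, 0, 0, 1]

theorem clebschGordan_mem_unitaryGroup : clebschGordan ∈ unitaryGroup (Fin 8) ℂ := by
  rw [mem_unitaryGroup_iff']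
  ext i j
  fin_cases i <;> fin_cases j <;>
    simp [clebschGordan, star_eq_conjTranspose, mul_apply, Fin.sum_univ_eight, one_apply,
      map_ofNat] <;>
    ring_nf <;> simp [sqrt2_sq, sqrt3_sq] <;> norm_num

set_option maxHeartbeats 1000000 in
theorem collectiveSpin_mul_clebschGordan (σ : Matrix (Fin 2) (Fin 2) ℂ) :
    reindex qubitLabel qubitLabel (collectiveSpin 3 σ) * clebschGordan =
      clebschGordan * reindex blockLabel.symm blockLabel.symm
        (blockEmbedding (σ + σ.trace • 1, spinThreeHalfRep σ)) := by
  ext i j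
  simp only [mul_apply, reindex_apply, submatrix_apply, Equiv.symm_symm, blockLabel_eq,
    qubitLabel_symm_eq, collectiveSpin_three, Fin.sum_univ_eight, blockEmbedding_apply]
  fin_cases i <;> fin_cases j <;>
    simp [clebschGordan, spinThreeHalfRep, trace_fin_two, one_apply] <;>
    ring_nf <;> simp [sqrt3_sq] <;> ring_nf

def basisLabel : (Fin 3 → Fin 2) ≃ (Fin 2 × Fin 2) ⊕ Fin 4 := qubitLabel.trans blockLabel

def clebschGordanUnitary : unitaryGroup (Fin 3 → Fin 2) ℂ :=
  ⟨_, reindex_mem_unitaryGroup clebschGordan_mem_unitaryGroup qubitLabel.symm⟩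

theorem unitaryConjReindex_collectiveSpin (σ : Matrix (Fin 2) (Fin 2) ℂ) :
    unitaryConjReindex clebschGordanUnitary basisLabel (collectiveSpin 3 σ) =
      blockEmbedding (σ + σ.trace • 1, spinThreeHalfRep σ) := by
  set U : Matrix (Fin 3 → Fin 2) (Fin 3 → Fin 2) ℂ := ↑clebschGordanUnitary
  set D := blockEmbedding (σ + σ.trace • 1, spinThreeHalfRep σ)
  have hU : reindex qubitLabel qubitLabel U = clebschGordan := by simp [U, clebschGordanUnitary]
  calc unitaryConjReindex clebschGordanUnitary basisLabel (collectiveSpin 3 σ)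
      = reindex blockLabel blockLabel
          (reindexStarAlgEquiv ℂ qubitLabel (star U * collectiveSpin 3 σ * U)) := by
        rw [unitaryConjReindex_apply, star_eq_conjTranspose]; rfl
    _ = reindex blockLabel blockLabel (star clebschGordan *
          (reindex qubitLabel qubitLabel (collectiveSpin 3 σ) * clebschGordan)) := by
        simp only [map_mul, map_star, reindexStarAlgEquiv_apply, hU, mul_assoc]
    _ = reindex blockLabel blockLabel
          (star clebschGordan * clebschGordan * reindex blockLabel.symm blockLabel.symm D) := by
        rw [collectiveSpin_mul_clebschGordan, mul_assoc]
    _ = D := by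
        rw [Unitary.star_mul_self_of_mem clebschGordan_mem_unitaryGroup, one_mul]
        simp

theorem casimir_pauli_spinThreeHalfRep :
    (pauliX, spinThreeHalfRep pauliX) ^ 2 + (pauliY, spinThreeHalfRep pauliY) ^ 2 +
      (pauliZ, spinThreeHalfRep pauliZ) ^ 2 = (3 : ℂ) • 1 + (12 : ℂ) • (0, 1) := by
  ext1
  · simp only [Prod.fst_add, sq, Prod.fst_mul, pauliX_mul_self, pauliY_mul_self,
      pauliZ_mul_self, Prod.smul_fst, Prod.fst_one, smul_zero]
    module
  · simp only [Prod.snd_add, Prod.pow_snd, spinThreeHalfRep_casimir, Prod.smul_snd, Prod.snd_one]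
    module

theorem subalgebra_eq_top_of_pauliX_mem_of_pauliZ_mem
    {S : Subalgebra ℂ (Matrix (Fin 2) (Fin 2) ℂ)} (hX : pauliX ∈ S) (hZ : pauliZ ∈ S) : S = ⊤ := by
  refine subalgebra_eq_top_of_injective_diagonal_mem (d := ![1, -1]) ?_ (pauliZ_eq_diagonal ▸ hZ)
    hX ?_
  · intro i j h; fin_cases i <;> fin_cases j <;> first | rfl | norm_num at h
  · intro i j h; fin_cases i <;> fin_cases j <;> simp_all [pauliX]

theorem subalgebra_eq_top_of_spinThreeHalfRep_mem {S : Subalgebra ℂ (Matrix (Fin 4) (Fin 4) ℂ)}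
    (hX : spinThreeHalfRep pauliX ∈ S) (hZ : spinThreeHalfRep pauliZ ∈ S) : S = ⊤ := by
  refine subalgebra_eq_top_of_injective_diagonal_mem (d := ![3, 1, -1, -3]) ?_
    (spinThreeHalfRep_pauliZ ▸ hZ) hX ?_
  · intro i j h; fin_cases i <;> fin_cases j <;> first | rfl | norm_num at h
  · intro i j h
    fin_cases i <;> fin_cases j <;> simp_all [spinThreeHalfRep, pauliX, sqrt3_ne_zero]

theorem adjoin_pauli_spinThreeHalfRep_eq_top :
    StarAlgebra.adjoin ℂ {(pauliX, spinThreeHalfRep pauliX), (pauliY, spinThreeHalfRep pauliY),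
      (pauliZ, spinThreeHalfRep pauliZ)} = ⊤ := by
  rw [← StarSubalgebra.toSubalgebra_eq_top]
  set T := (StarAlgebra.adjoin ℂ {(pauliX, spinThreeHalfRep pauliX),
    (pauliY, spinThreeHalfRep pauliY), (pauliZ, spinThreeHalfRep pauliZ)}).toSubalgebra
  have hX : (pauliX, spinThreeHalfRep pauliX) ∈ T := StarAlgebra.subset_adjoin ℂ _ (by simp)
  have hY : (pauliY, spinThreeHalfRep pauliY) ∈ T := StarAlgebra.subset_adjoin ℂ _ (by simp)
  have hZ : (pauliZ, spinThreeHalfRep pauliZ) ∈ T := StarAlgebra.subset_adjoin ℂ _ (by simp)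
  have h01 : ((0, 1) : Matrix (Fin 2) (Fin 2) ℂ × Matrix (Fin 4) (Fin 4) ℂ) ∈ T := by
    have h : ((0, 1) : Matrix (Fin 2) (Fin 2) ℂ × Matrix (Fin 4) (Fin 4) ℂ) =
        (12 : ℂ)⁻¹ • ((pauliX, spinThreeHalfRep pauliX) ^ 2 +
          (pauliY, spinThreeHalfRep pauliY) ^ 2 + (pauliZ, spinThreeHalfRep pauliZ) ^ 2 -
          (3 : ℂ) • 1) := by
      rw [casimir_pauli_spinThreeHalfRep, add_sub_cancel_left, smul_smul]; norm_num
    rw [h]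
    exact T.smul_mem (sub_mem (add_mem (add_mem (pow_mem hX 2) (pow_mem hY 2)) (pow_mem hZ 2))
      (T.smul_mem (one_mem T) _)) _
  exact Subalgebra.eq_top_of_map_fst_of_map_snd h01
    (subalgebra_eq_top_of_pauliX_mem_of_pauliZ_mem (Subalgebra.mem_map.2 ⟨_, hX, rfl⟩)
      (Subalgebra.mem_map.2 ⟨_, hZ, rfl⟩))
    (subalgebra_eq_top_of_spinThreeHalfRep_mem (Subalgebra.mem_map.2 ⟨_, hX, rfl⟩)
      (Subalgebra.mem_map.2 ⟨_, hZ, rfl⟩))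

end

end ThreeQubits

open ThreeQubits in
/-- For three qubits, the collective-noise algebra decomposes as
(M_2 ⊗ I_2) ⊕ M_4. -/
theorem collective_noise_wedderburn_three_qubits :
    ∃ (e : (Fin 3 → Fin 2) ≃ ((Fin 2 × Fin 2) ⊕ Fin 4))
      (U : Matrix (Fin 3 → Fin 2) (Fin 3 → Fin 2) ℂ),
      U ∈ Matrix.unitaryGroup (Fin 3 → Fin 2) ℂ ∧
      ∀ M : Matrix (Fin 3 → Fin 2) (Fin 3 → Fin 2) ℂ,
        M ∈ StarAlgebra.adjoin ℂ
            {collectiveSpin 3 pauliX, collectiveSpin 3 pauliY, collectiveSpin 3 pauliZ} ↔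
          ∃ (B : Matrix (Fin 2) (Fin 2) ℂ) (C : Matrix (Fin 4) (Fin 4) ℂ),
            Matrix.reindex e e (Uᴴ * M * U) =
              Matrix.fromBlocks (B ⊗ₖ (1 : Matrix (Fin 2) (Fin 2) ℂ)) 0 0 C := by
  refine ⟨basisLabel, clebschGordanUnitary, clebschGordanUnitary.2, fun M => ?_⟩
  set Φ := unitaryConjReindex clebschGordanUnitary basisLabel
  have himage : Φ '' {collectiveSpin 3 pauliX, collectiveSpin 3 pauliY, collectiveSpin 3 pauliZ} =
      blockEmbedding '' {(pauliX, spinThreeHalfRep pauliX), (pauliY, spinThreeHalfRep pauliY),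
        (pauliZ, spinThreeHalfRep pauliZ)} := by
    simp only [Set.image_insert_eq, Set.image_singleton, Φ, unitaryConjReindex_collectiveSpin,
      trace_pauliX, trace_pauliY, trace_pauliZ, zero_smul, add_zero]
  rw [← Φ.apply_mem_adjoin_image_iff, himage, ← StarAlgHom.map_adjoin,
    adjoin_pauli_spinThreeHalfRep_eq_top, StarSubalgebra.mem_map]
  simp [Φ, unitaryConjReindex_apply, blockEmbedding_apply, eq_comm]
end
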